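/- arXiv:2105.05461 — 6 statements merged into one kernel-verified Lean document; each statement's English description precedes it below -/
import Mathlib

section
/- Let G be a compact topological group with Haar probability measure μ. Let ρ and σ be continuous unitary representations of G on nonzero finite-dimensional complex inner product spaces V and W respectively, both irreducible, and inequivalent in the sense that the only ℂ-linear map T : V → W satisfying T ∘ ρ(g) = σ(g) ∘ T for all g ∈ G is T = 0. Then for all v, w ∈ V and v', w' ∈ W, the matrix coefficients are orthogonal in L²(G, μ): ∫_G ⟪w, ρ(g) v⟫ · conj(⟪w', σ(g) v'⟫) dμ(g) = 0. -/
/-!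
Average the rank-one operator `T₀ = ⟪w, ·⟫ • w'` over `G`, forming
`T = ∫ σ(g)⁻¹ ∘ T₀ ∘ ρ(g) dμ(g)`. Right invariance of the Haar measure makes `T` intertwine
`ρ` and `σ`, so `T = 0` by inequivalence; unitarity of `σ` identifies `⟪v', T v⟫` with the
integral of the product of the two matrix coefficients.
-/

open MeasureTheory

namespace MeasureTheory.Measure

/-- Compact groups are unimodular: a right translate of `μ` is again a left Haar measure, with the
same finite, nonzero total mass. -/
instance isMulRightInvariant_of_compactSpace {G : Type*} [Group G] [TopologicalSpace G]
    [IsTopologicalGroup G] [CompactSpace G] [MeasurableSpace G] [BorelSpace G]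
    (μ : Measure G) [μ.IsHaarMeasure] : μ.IsMulRightInvariant := by
  refine ⟨fun g => ?_⟩
  have hscalar := isMulInvariant_eq_smul_of_compactSpace (μ.map (· * g)) μ
  have huniv : μ.map (· * g) Set.univ = μ Set.univ := by
    rw [map_apply (measurable_mul_const g) MeasurableSet.univ, Set.preimage_univ]
  have hone : haarScalarFactor (μ.map (· * g)) μ = 1 := by
    rw [hscalar, smul_apply, ENNReal.smul_def, smul_eq_mul] at huniv
    exact_mod_cast (ENNReal.mul_eq_right (measure_univ_ne_zero.2 (NeZero.ne μ))
      (measure_ne_top μ _)).1 huniv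
  rw [hscalar, hone, one_smul]

end MeasureTheory.Measure

section Averaging

variable {G : Type*} [Group G]
  {V W : Type*} [NormedAddCommGroup V] [NormedSpace ℂ V] [FiniteDimensional ℂ V]
  [NormedAddCommGroup W] [NormedSpace ℂ W] [FiniteDimensional ℂ W]
  (ρ : G →* (V ≃ₗ[ℂ] V)) (σ : G →* (W ≃ₗ[ℂ] W))

noncomputable def conjByRep (T : V →L[ℂ] W) (g : G) : V →L[ℂ] W :=
  (σ g⁻¹ : W →ₗ[ℂ] W).toContinuousLinearMap ∘L T ∘L (ρ g : V →ₗ[ℂ] V).toContinuousLinearMap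

noncomputable def averagedMap [MeasurableSpace G] (μ : Measure G) (T : V →L[ℂ] W) :
    V →L[ℂ] W :=
  ∫ g, conjByRep ρ σ T g ∂μ

@[simp]
theorem conjByRep_apply (T : V →L[ℂ] W) (g : G) (v : V) :
    conjByRep ρ σ T g v = σ g⁻¹ (T (ρ g v)) := rfl

theorem conjByRep_apply_map (T : V →L[ℂ] W) (g h : G) (v : V) :
    conjByRep ρ σ T g (ρ h v) = σ h (conjByRep ρ σ T (g * h) v) := by
  simp [map_inv]

variable {ρ σ}

theorem continuous_conjByRep [TopologicalSpace G] [IsTopologicalGroup G]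
    (hρ : ∀ v, Continuous fun g => ρ g v) (hσ : ∀ w, Continuous fun g => σ g w) (T : V →L[ℂ] W) :
    Continuous (conjByRep ρ σ T) := by
  have hρ' : Continuous fun g => (ρ g : V →ₗ[ℂ] V).toContinuousLinearMap :=
    continuous_clm_apply.2 hρ
  have hσ' : Continuous fun g => (σ g : W →ₗ[ℂ] W).toContinuousLinearMap :=
    continuous_clm_apply.2 hσ
  exact (hσ'.comp continuous_inv).clm_comp (continuous_const.clm_comp hρ')

theorem integrable_conjByRep [TopologicalSpace G] [IsTopologicalGroup G] [CompactSpace G]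
    [MeasurableSpace G] [OpensMeasurableSpace G] (μ : Measure G) [IsFiniteMeasureOnCompacts μ]
    (hρ : ∀ v, Continuous fun g => ρ g v) (hσ : ∀ w, Continuous fun g => σ g w)
    (T : V →L[ℂ] W) : Integrable (conjByRep ρ σ T) μ :=
  (continuous_conjByRep hρ hσ T).integrable_of_hasCompactSupport
    (HasCompactSupport.of_compactSpace _)

theorem averagedMap_apply_map [TopologicalSpace G] [IsTopologicalGroup G] [CompactSpace G]
    [MeasurableSpace G] [BorelSpace G] (μ : Measure G) [μ.IsHaarMeasure]
    (hρ : ∀ v, Continuous fun g => ρ g v) (hσ : ∀ w, Continuous fun g => σ g w)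
    (T : V →L[ℂ] W) (h : G) (v : V) :
    averagedMap ρ σ μ T (ρ h v) = σ h (averagedMap ρ σ μ T v) := by
  have hint := integrable_conjByRep μ hρ hσ T
  calc averagedMap ρ σ μ T (ρ h v)
      = ∫ g, conjByRep ρ σ T g (ρ h v) ∂μ := ContinuousLinearMap.integral_apply hint _
    _ = ∫ g, σ h (conjByRep ρ σ T (g * h) v) ∂μ := by simp_rw [conjByRep_apply_map]
    _ = σ h (∫ g, conjByRep ρ σ T (g * h) v ∂μ) :=
        (σ h).toContinuousLinearEquiv.integral_comp_comm _
    _ = σ h (averagedMap ρ σ μ T v) := by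
        rw [integral_mul_right_eq_self (fun g => conjByRep ρ σ T g v), averagedMap,
          ContinuousLinearMap.integral_apply hint]

end Averaging

theorem inner_averagedMap_apply {G : Type*} [Group G] [TopologicalSpace G] [IsTopologicalGroup G]
    [CompactSpace G] [MeasurableSpace G] [OpensMeasurableSpace G]
    (μ : Measure G) [IsFiniteMeasureOnCompacts μ]
    {V W : Type*} [NormedAddCommGroup V] [NormedSpace ℂ V] [FiniteDimensional ℂ V]
    [NormedAddCommGroup W] [InnerProductSpace ℂ W] [FiniteDimensional ℂ W]
    {ρ : G →* (V ≃ₗ[ℂ] V)} {σ : G →* (W ≃ₗ[ℂ] W)}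
    (hσunit : ∀ (g : G) (w w' : W), inner ℂ (σ g w) (σ g w') = inner ℂ w w')
    (hρ : ∀ v, Continuous fun g => ρ g v) (hσ : ∀ w, Continuous fun g => σ g w)
    (T : V →L[ℂ] W) (v : V) (w : W) :
    inner ℂ w (averagedMap ρ σ μ T v) = ∫ g, inner ℂ (σ g w) (T (ρ g v)) ∂μ := by
  have hint := integrable_conjByRep μ hρ hσ T
  rw [averagedMap, ContinuousLinearMap.integral_apply hint,
    ← integral_inner (hint.apply_continuousLinearMap v)]
  congr with g
  rw [← hσunit g, conjByRep_apply]
  simp [map_inv]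

theorem schur_orthogonality_inequivalent_general
    {G : Type*} [Group G] [TopologicalSpace G] [IsTopologicalGroup G]
    [CompactSpace G] [MeasurableSpace G] [BorelSpace G]
    (μ : Measure G) [μ.IsHaarMeasure]
    {V : Type*} [NormedAddCommGroup V] [InnerProductSpace ℂ V]
    [FiniteDimensional ℂ V]
    {W : Type*} [NormedAddCommGroup W] [InnerProductSpace ℂ W]
    [FiniteDimensional ℂ W]
    (ρ : G →* (V ≃ₗ[ℂ] V)) (σ : G →* (W ≃ₗ[ℂ] W))
    (hσunit : ∀ (g : G) (v w : W), (inner ℂ ((σ g) v) ((σ g) w) : ℂ) = inner ℂ v w)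
    (hρcont : ∀ v : V, Continuous fun g : G => (ρ g) v)
    (hσcont : ∀ w : W, Continuous fun g : G => (σ g) w)
    (hineq : ∀ T : V →ₗ[ℂ] W, (∀ (g : G) (v : V), T ((ρ g) v) = (σ g) (T v)) → T = 0) :
    ∀ (v w : V) (v' w' : W),
      ∫ g, (inner ℂ w ((ρ g) v) : ℂ) * (starRingEnd ℂ) (inner ℂ w' ((σ g) v') : ℂ) ∂μ = 0 := by
  intro v w v' w'
  set T := averagedMap ρ σ μ ((innerSL ℂ w).smulRight w')
  have hT : T.toLinearMap = 0 := hineq _ (averagedMap_apply_map μ hρcont hσcont _)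
  calc ∫ g, (inner ℂ w ((ρ g) v) : ℂ) * (starRingEnd ℂ) (inner ℂ w' ((σ g) v') : ℂ) ∂μ
      = inner ℂ v' (T v) := by
        rw [inner_averagedMap_apply μ hσunit hρcont hσcont]
        simp
    _ = 0 := by rw [show T v = 0 from LinearMap.congr_fun hT v, inner_zero_right]

/-- Schur orthogonality relations for matrix coefficients of two inequivalent
irreducible continuous unitary representations of a compact group. -/
theorem schur_orthogonality_inequivalent
    {G : Type*} [Group G] [TopologicalSpace G] [IsTopologicalGroup G]
    [CompactSpace G] [T2Space G] [MeasurableSpace G] [BorelSpace G]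
    (μ : Measure G) [μ.IsHaarMeasure] [IsProbabilityMeasure μ]
    {V : Type*} [NormedAddCommGroup V] [InnerProductSpace ℂ V]
    [FiniteDimensional ℂ V] [Nontrivial V]
    {W : Type*} [NormedAddCommGroup W] [InnerProductSpace ℂ W]
    [FiniteDimensional ℂ W] [Nontrivial W]
    (ρ : G →* (V ≃ₗ[ℂ] V)) (σ : G →* (W ≃ₗ[ℂ] W))
    (hρunit : ∀ (g : G) (v w : V), (inner ℂ ((ρ g) v) ((ρ g) w) : ℂ) = inner ℂ v w)
    (hσunit : ∀ (g : G) (v w : W), (inner ℂ ((σ g) v) ((σ g) w) : ℂ) = inner ℂ v w)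
    (hρcont : ∀ v : V, Continuous fun g : G => (ρ g) v)
    (hσcont : ∀ w : W, Continuous fun g : G => (σ g) w)
    (hρirr : ∀ U : Submodule ℂ V, (∀ (g : G), ∀ v ∈ U, (ρ g) v ∈ U) → U = ⊥ ∨ U = ⊤)
    (hσirr : ∀ U : Submodule ℂ W, (∀ (g : G), ∀ w ∈ U, (σ g) w ∈ U) → U = ⊥ ∨ U = ⊤)
    (hineq : ∀ T : V →ₗ[ℂ] W, (∀ (g : G) (v : V), T ((ρ g) v) = (σ g) (T v)) → T = 0) :
    ∀ (v w : V) (v' w' : W),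
      ∫ g, (inner ℂ w ((ρ g) v) : ℂ) * (starRingEnd ℂ) (inner ℂ w' ((σ g) v') : ℂ) ∂μ = 0 :=
  schur_orthogonality_inequivalent_general μ ρ σ hσunit hρcont hσcont hineq
end

section
/- Let G be a compact topological group with Haar probability measure μ and let ρ be a continuous unitary irreducible representation of G on a nonzero finite-dimensional complex inner product space V of dimension d. Then for all v, v', w, w' ∈ V: ∫_G ⟪w, ρ(g) v⟫ · conj(⟪w', ρ(g) v'⟫) dμ(g) = (1/d) · ⟪w, w'⟫ · ⟪v', v⟫. In particular, the rescaled matrix coefficients √d · ⟪e_i, ρ(g) e_j⟫ taken with respect to an orthonormal basis (e_i) form an orthonormal family in L²(G, μ). -/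
open MeasureTheory

/-- Schur orthogonality relations for matrix coefficients of a single irreducible
continuous unitary representation of a compact group, with the consequence that the
rescaled matrix coefficients with respect to an orthonormal basis are orthonormal in L². -/
theorem schur_orthogonality_same
    {G : Type*} [Group G] [TopologicalSpace G] [IsTopologicalGroup G]
    [CompactSpace G] [T2Space G] [MeasurableSpace G] [BorelSpace G]
    (μ : Measure G) [μ.IsHaarMeasure] [IsProbabilityMeasure μ]
    {V : Type*} [NormedAddCommGroup V] [InnerProductSpace ℂ V]
    [FiniteDimensional ℂ V] [Nontrivial V]
    (ρ : G →* (V ≃ₗ[ℂ] V))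
    (hunit : ∀ (g : G) (v w : V), (inner ℂ ((ρ g) v) ((ρ g) w) : ℂ) = inner ℂ v w)
    (hcont : ∀ v : V, Continuous fun g : G => (ρ g) v)
    (hirr : ∀ U : Submodule ℂ V, (∀ (g : G), ∀ v ∈ U, (ρ g) v ∈ U) → U = ⊥ ∨ U = ⊤)
    {ι : Type*} [Fintype ι] [DecidableEq ι] (e : OrthonormalBasis ι ℂ V) :
    (∀ v v' w w' : V,
      ∫ g, (inner ℂ w ((ρ g) v) : ℂ) * (starRingEnd ℂ) (inner ℂ w' ((ρ g) v') : ℂ) ∂μ =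
        (1 / (Module.finrank ℂ V : ℂ)) * inner ℂ w w' * inner ℂ v' v) ∧
    (∀ i j k l : ι,
      ∫ g, ((Real.sqrt (Module.finrank ℂ V) : ℂ) * (inner ℂ (e i) ((ρ g) (e j)) : ℂ)) *
          (starRingEnd ℂ)
            ((Real.sqrt (Module.finrank ℂ V) : ℂ) * (inner ℂ (e k) ((ρ g) (e l)) : ℂ)) ∂μ =
        if i = k ∧ j = l then 1 else 0) := by
  have hdpos : 0 < Module.finrank ℂ V := Module.finrank_pos
  have hd0 : (Module.finrank ℂ V : ℂ) ≠ 0 := by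
    exact_mod_cast Nat.cast_ne_zero.mpr hdpos.ne'
  have hint : ∀ (a b c : V),
      Integrable (fun g => (inner ℂ ((ρ g) a) b : ℂ) • ((ρ g) c)) μ := by
    intro a b c
    exact (((hcont a).inner continuous_const).smul (hcont c)).integrable_of_hasCompactSupport
      (HasCompactSupport.of_compactSpace _)
  have key : ∀ v v' w w' : V,
      ∫ g, (inner ℂ w ((ρ g) v) : ℂ) * (starRingEnd ℂ) (inner ℂ w' ((ρ g) v') : ℂ) ∂μ =
        (1 / (Module.finrank ℂ V : ℂ)) * inner ℂ w w' * inner ℂ v' v := by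
    intro v v' w w'
    -- the intertwining operator
    set T : Module.End ℂ V :=
      { toFun := fun x => ∫ g, (inner ℂ ((ρ g) v') x : ℂ) • ((ρ g) v) ∂μ
        map_add' := by
          intro x y
          simp only [inner_add_right, add_smul]
          exact integral_add (hint v' x v) (hint v' y v)
        map_smul' := by
          intro c x
          simp only [inner_smul_right, mul_smul, RingHom.id_apply]
          exact integral_smul c _ } with hT
    have hTapp : ∀ x : V, T x = ∫ g, (inner ℂ ((ρ g) v') x : ℂ) • ((ρ g) v) ∂μ := fun _ => rfl
    -- T commutes with the representation
    have hcomm : ∀ (h : G) (x : V), T ((ρ h) x) = (ρ h) (T x) := by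
      intro h x
      have hA := (LinearMap.toContinuousLinearMap ((ρ h) : V →ₗ[ℂ] V)).integral_comp_comm
        (hint v' x v)
      simp only [LinearMap.coe_toContinuousLinearMap', LinearEquiv.coe_coe] at hA
      calc T ((ρ h) x) = ∫ g, (inner ℂ ((ρ g) v') ((ρ h) x) : ℂ) • ((ρ g) v) ∂μ := rfl
        _ = ∫ g, (inner ℂ ((ρ (h * g)) v') ((ρ h) x) : ℂ) • ((ρ (h * g)) v) ∂μ :=
            (integral_mul_left_eq_self (fun g => (inner ℂ ((ρ g) v') ((ρ h) x) : ℂ) • ((ρ g) v)) h).symm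
        _ = ∫ g, (ρ h) ((inner ℂ ((ρ g) v') x : ℂ) • ((ρ g) v)) ∂μ := by
            congr 1; funext g
            have hmul : ∀ y : V, (ρ (h * g)) y = (ρ h) ((ρ g) y) := fun y => by
              rw [map_mul]; rfl
            have h5 : (inner ℂ ((ρ h) ((ρ g) v')) ((ρ h) x) : ℂ) = inner ℂ ((ρ g) v') x := hunit h _ _
            rw [hmul, hmul, h5, LinearEquiv.map_smul]
        _ = (ρ h) (T x) := hA
    -- Schur's lemma: T is a scalar
    obtain ⟨c, hc⟩ := Module.End.exists_eigenvalue T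
    have hU : ∀ x : V, T x = c • x := by
      have := hirr (Module.End.eigenspace T c) ?_
      · rcases this with hbot | htop
        · exact absurd hbot hc
        · intro x
          have hx : x ∈ Module.End.eigenspace T c := htop ▸ Submodule.mem_top
          exact (Module.End.mem_eigenspace_iff).mp hx
      · intro g x hx
        rw [Module.End.mem_eigenspace_iff] at hx ⊢
        rw [hcomm g x, hx, LinearEquiv.map_smul]
    -- identify the integral with ⟪w, T w'⟫
    have hI : ∀ a b : V,
        ∫ g, (inner ℂ a ((ρ g) v) : ℂ) * (starRingEnd ℂ) (inner ℂ b ((ρ g) v') : ℂ) ∂μ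
          = c * inner ℂ a b := by
      intro a b
      have h1 : ∀ g : G, (inner ℂ a ((ρ g) v) : ℂ) * (starRingEnd ℂ) (inner ℂ b ((ρ g) v') : ℂ)
          = inner ℂ a ((inner ℂ ((ρ g) v') b : ℂ) • ((ρ g) v)) := by
        intro g
        rw [inner_smul_right, ← inner_conj_symm ((ρ g) v') b]
        ring
      simp_rw [h1]
      rw [integral_inner (hint v' b v) a, ← hTapp b, hU b, inner_smul_right]
    -- compute c via the trace
    have htrace : (Module.finrank ℂ V : ℂ) * c = inner ℂ v' v := by
      set b := stdOrthonormalBasis ℂ V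
      have h2 : ∀ i, (inner ℂ (b i) (T (b i)) : ℂ) = c := by
        intro i
        rw [hU, inner_smul_right, inner_self_eq_norm_sq_to_K]
        simp [b.orthonormal.1 i]
      have h3 : ∀ i, (inner ℂ (b i) (T (b i)) : ℂ)
          = ∫ g, (inner ℂ ((ρ g) v') (b i) : ℂ) * (inner ℂ (b i) ((ρ g) v) : ℂ) ∂μ := by
        intro i
        rw [hTapp, ← integral_inner (hint v' (b i) v) (b i)]
        congr 1; funext g; rw [inner_smul_right]
      have h4 : ∑ i, (inner ℂ (b i) (T (b i)) : ℂ) = inner ℂ v' v := by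
        simp_rw [h3]
        rw [← integral_finset_sum]
        · have : ∀ g : G, ∑ i, (inner ℂ ((ρ g) v') (b i) : ℂ) * (inner ℂ (b i) ((ρ g) v) : ℂ)
              = inner ℂ v' v := by
            intro g
            rw [b.sum_inner_mul_inner, hunit]
          simp_rw [this]
          simp
        · intro i _
          exact (((hcont v').inner continuous_const).mul
            (continuous_const.inner (hcont v))).integrable_of_hasCompactSupport
            (HasCompactSupport.of_compactSpace _)
      rw [← h4, Finset.sum_congr rfl (fun i _ => h2 i)]
      simp only [Finset.sum_const, Finset.card_univ, Fintype.card_fin, nsmul_eq_mul]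
    have hc' : c = inner ℂ v' v / (Module.finrank ℂ V : ℂ) := by
      field_simp at htrace ⊢
      linear_combination htrace
    rw [hI w w', hc']
    ring
  refine ⟨key, ?_⟩
  intro i j k l
  have hs : ((Real.sqrt (Module.finrank ℂ V) : ℂ)) * (starRingEnd ℂ) (Real.sqrt (Module.finrank ℂ V) : ℂ)
      = (Module.finrank ℂ V : ℂ) := by
    rw [Complex.conj_ofReal, ← Complex.ofReal_mul,
      Real.mul_self_sqrt (Nat.cast_nonneg _)]
    simp
  have : (∫ g, ((Real.sqrt (Module.finrank ℂ V) : ℂ) * (inner ℂ (e i) ((ρ g) (e j)) : ℂ)) *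
          (starRingEnd ℂ) ((Real.sqrt (Module.finrank ℂ V) : ℂ) * (inner ℂ (e k) ((ρ g) (e l)) : ℂ)) ∂μ)
      = (Module.finrank ℂ V : ℂ) *
        ∫ g, (inner ℂ (e i) ((ρ g) (e j)) : ℂ) * (starRingEnd ℂ) (inner ℂ (e k) ((ρ g) (e l)) : ℂ) ∂μ := by
    rw [← integral_const_mul]
    congr 1; funext g
    rw [map_mul]
    linear_combination ((inner ℂ (e i) ((ρ g) (e j)) : ℂ) *
      (starRingEnd ℂ) (inner ℂ (e k) ((ρ g) (e l)) : ℂ)) * hs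
  rw [this, key (e j) (e l) (e i) (e k)]
  have hik : (inner ℂ (e i) (e k) : ℂ) = if i = k then 1 else 0 :=
    orthonormal_iff_ite.mp e.orthonormal i k
  have hlj : (inner ℂ (e l) (e j) : ℂ) = if j = l then (1:ℂ) else 0 := by
    rw [orthonormal_iff_ite.mp e.orthonormal l j]
    by_cases h : j = l <;> simp [h, eq_comm]
  rw [hik, hlj]
  have hdpos : 0 < Module.finrank ℂ V := Module.finrank_pos
  have hd0 : (Module.finrank ℂ V : ℂ) ≠ 0 := by
    exact_mod_cast Nat.cast_ne_zero.mpr hdpos.ne'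
  by_cases h1 : i = k <;> by_cases h2 : j = l <;> simp [h1, h2] <;> field_simp
end

section
/- (No system of simple roots for centrality order r ≥ 2.) Let r ≥ 2 and let P ⊆ ℤ^r be the set of nonzero vectors v whose last nonzero coordinate is positive, i.e. v ≠ 0 and v(k) > 0 where k = max{ j : v(j) ≠ 0 }. Then there is no finite subset B ⊆ P such that every element of P can be written as a finite sum of elements of B with natural number coefficients. -/
/-- No system of simple roots for centrality order `r ≥ 2`: if `P ⊆ ℤ^r` is the set of
nonzero vectors whose last nonzero coordinate is positive (the lexicographically positive
cone, comparing from the last coordinate), then there is no finite subset `B ⊆ P` such that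
every element of `P` is a finite sum of elements of `B` with natural number coefficients
(i.e. lies in the additive submonoid generated by `B`). -/
theorem no_simple_root_system (r : ℕ) (hr : 2 ≤ r) (P : Set (Fin r → ℤ))
    (hP : P = {v : Fin r → ℤ | v ≠ 0 ∧
      ∃ k : Fin r, 0 < v k ∧ ∀ j : Fin r, k < j → v j = 0}) :
    ¬ ∃ B : Finset (Fin r → ℤ), ↑B ⊆ P ∧
        ∀ v ∈ P, v ∈ AddSubmonoid.closure (B : Set (Fin r → ℤ)) := by
  subst hP
  rintro ⟨B, hBP, hgen⟩
  have hr1 : r - 1 < r := by omega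
  have hr2 : r - 2 < r := by omega
  obtain ⟨j, hjval⟩ : ∃ j : Fin r, (j : ℕ) = r - 1 := ⟨⟨r - 1, hr1⟩, rfl⟩
  obtain ⟨i, hival⟩ : ∃ i : Fin r, (i : ℕ) = r - 2 := ⟨⟨r - 2, hr2⟩, rfl⟩
  have hij : i ≠ j := by
    intro h
    have hval : (i : ℕ) = (j : ℕ) := congrArg Fin.val h
    omega
  -- every element of B has nonnegative last coordinate
  have hbj : ∀ b ∈ B, 0 ≤ b j := by
    intro b hb
    obtain ⟨-, k, hk, hk0⟩ := hBP hb
    have hkj : k ≤ j := by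
      rw [Fin.le_def]
      have h1 := k.isLt
      have h2 := hjval
      omega
    rcases lt_or_eq_of_le hkj with h | h
    · rw [hk0 j h]
    · exact le_of_lt (h ▸ hk)
  -- if the last coordinate is 0, the (r-2)-th coordinate is nonnegative
  have hbi : ∀ b ∈ B, b j = 0 → 0 ≤ b i := by
    intro b hb hbj0
    obtain ⟨-, k, hk, hk0⟩ := hBP hb
    have hkj : k ≠ j := by
      intro h
      rw [h, hbj0] at hk
      exact lt_irrefl _ hk
    have hki : k ≤ i := by
      rw [Fin.le_def]
      have h1 : k.val ≤ r - 1 := by have := k.isLt; omega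
      have h2 : k.val ≠ r - 1 := by
        intro h
        exact hkj (Fin.ext (h.trans hjval.symm))
      have h3 := hival
      have h4 := hjval
      omega
    rcases lt_or_eq_of_le hki with h | h
    · rw [hk0 i h]
    · exact le_of_lt (h ▸ hk)
  obtain ⟨N, hNdef⟩ : ∃ N : ℕ, N = B.sup fun b => (b i).natAbs := ⟨_, rfl⟩
  have hN : ∀ b ∈ B, -(N : ℤ) ≤ b i := by
    intro b hb
    have h1 : (b i).natAbs ≤ N := hNdef ▸ Finset.le_sup (f := fun b => (b i).natAbs) hb
    have h2 : |b i| ≤ (N : ℤ) := by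
      rw [← Int.natCast_natAbs]
      exact_mod_cast h1
    linarith [neg_abs_le (b i), neg_le_neg h2]
  clear hNdef
  -- the witness vector
  obtain ⟨v, hv⟩ : ∃ v : Fin r → ℤ,
      v = fun t => if t = j then 1 else if t = i then -((N : ℤ) + 1) else 0 := ⟨_, rfl⟩
  have hvj : v j = 1 := by simp [hv]
  have hvi : v i = -((N : ℤ) + 1) := by
    simp [hv, hij]
  have hvP : v ∈ {v : Fin r → ℤ | v ≠ 0 ∧
      ∃ k : Fin r, 0 < v k ∧ ∀ j : Fin r, k < j → v j = 0} := by
    refine ⟨?_, j, ?_, ?_⟩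
    · intro h
      have := congrFun h j
      rw [hvj] at this
      simp at this
    · rw [hvj]; norm_num
    · intro t ht
      exfalso
      rw [Fin.lt_def] at ht
      have h1 := t.isLt
      omega
  have hmem := hgen v hvP
  -- the functional w ↦ w i + N * w j is nonneg on the closure
  let S : AddSubmonoid (Fin r → ℤ) :=
    { carrier := {w | 0 ≤ w i + (N : ℤ) * w j}
      zero_mem' := by simp
      add_mem' := by
        intro x y hx hy
        simp only [Set.mem_setOf_eq, Pi.add_apply] at *
        linarith }
  have key : AddSubmonoid.closure (B : Set (Fin r → ℤ)) ≤ S := by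
    rw [AddSubmonoid.closure_le]
    intro b hb
    have hb' : b ∈ B := hb
    show 0 ≤ b i + (N : ℤ) * b j
    rcases eq_or_lt_of_le (hbj b hb') with h | h
    · have := hbi b hb' h.symm
      rw [← h]
      linarith
    · have h1 : (1 : ℤ) ≤ b j := h
      have h2 := hN b hb'
      nlinarith
  have : 0 ≤ v i + (N : ℤ) * v j := key hmem
  rw [hvi, hvj] at this
  linarith
end

section
/- For natural numbers a, b define ψ_{a,b}(θ, φ₁, φ₂) = √((a+b+1)!/(a!·b!)) · (cos θ · e^{iφ₁})^a · (−sin θ · e^{−iφ₂})^b. Then for all a, b, a', b' ∈ ℕ: (1/(2π²)) ∫₀^{2π} ∫₀^{2π} ∫₀^{π/2} sin θ · cos θ · conj(ψ_{a,b}(θ,φ₁,φ₂)) · ψ_{a',b'}(θ,φ₁,φ₂) dθ dφ₁ dφ₂ = 1 if a = a' and b = b', and = 0 otherwise. -/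
open Real Complex intervalIntegral MeasureTheory

/-- The functions `ψ_{a,b}(θ, φ₁, φ₂) = √((a+b+1)!/(a!·b!)) · (cos θ e^{iφ₁})^a ·
(−sin θ e^{−iφ₂})^b` on the group manifold `SU(2) ≅ 𝕊³`. -/
noncomputable def psiSU2 (a b : ℕ) (θ φ₁ φ₂ : ℝ) : ℂ :=
  (Real.sqrt ((Nat.factorial (a + b + 1) : ℝ) /
      ((Nat.factorial a : ℝ) * (Nat.factorial b : ℝ))) : ℂ) *
    ((Real.cos θ : ℂ) * Complex.exp (Complex.I * (φ₁ : ℂ))) ^ a *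
    (-(Real.sin θ : ℂ) * Complex.exp (-(Complex.I * (φ₂ : ℂ)))) ^ b

lemma intPhi (n : ℤ) : (∫ φ in (0:ℝ)..(2*Real.pi), Complex.exp ((n:ℂ) * Complex.I * (φ:ℂ)))
    = if n = 0 then (2*Real.pi : ℂ) else 0 := by
  rcases eq_or_ne n 0 with h | h
  · simp [h, intervalIntegral.integral_const]
  · rw [if_neg h]
    have hc : (n:ℂ) * Complex.I ≠ 0 := by
      simp [Complex.ext_iff, Int.cast_injective.ne_iff, h]
    have := integral_exp_mul_complex (a := 0) (b := 2*Real.pi) hc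
    simp only [mul_assoc] at this ⊢
    rw [this]
    have h1 : (n:ℂ) * (Complex.I * ((2*Real.pi : ℝ) : ℂ)) = (n:ℂ) * (2*Real.pi*Complex.I) := by
      push_cast; ring
    rw [h1, Complex.exp_int_mul_two_pi_mul_I]
    simp

lemma aux_I (b : ℕ) : ∀ a : ℕ, (∫ u in (0:ℝ)..1, u^(2*b+1) * (1-u^2)^a)
    = (a.factorial * b.factorial : ℝ) / (2 * (a+b+1).factorial) := by
  intro a
  induction a with
  | zero =>
    simp only [pow_zero, mul_one, integral_pow]
    rw [Nat.zero_add, Nat.factorial_succ]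
    push_cast
    rw [one_pow, zero_pow (by omega)]
    have : ((b.factorial : ℝ)) ≠ 0 := by positivity
    field_simp
    ring
  | succ a ih =>
    have key : (2*(b:ℝ)+2*a+4) * (∫ u in (0:ℝ)..1, u^(2*b+1) * (1-u^2)^(a+1))
        = (2*a+2) * ∫ u in (0:ℝ)..1, u^(2*b+1) * (1-u^2)^a := by
      have hderiv : ∀ u ∈ Set.uIcc (0:ℝ) 1,
          HasDerivAt (fun u : ℝ => u^(2*b+2) * (1-u^2)^(a+1))
            ((2*(b:ℝ)+2*a+4) * (u^(2*b+1) * (1-u^2)^(a+1))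
              - (2*a+2) * (u^(2*b+1) * (1-u^2)^a)) u := by
        intro u _
        have h1 : HasDerivAt (fun u : ℝ => u^(2*b+2)) ((2*b+2) * u^(2*b+1)) u := by
          simpa using (hasDerivAt_pow (2*b+2) u)
        have h2 : HasDerivAt (fun u : ℝ => (1-u^2)^(a+1))
            ((a+1 : ℝ) * (1-u^2)^a * (-(2*u))) u := by
          have := ((hasDerivAt_pow (a+1) (1-u^2)).comp u
            (((hasDerivAt_pow 2 u).const_sub 1)))
          simpa [Function.comp_def] using this
        have := h1.mul h2
        refine this.congr_deriv (Eq.symm ?_)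
        have hsq : (1-u^2)^a * u^2 = (1-u^2)^a - (1-u^2)^(a+1) := by ring
        calc (2*(b:ℝ)+2*a+4) * (u^(2*b+1) * (1-u^2)^(a+1))
              - (2*a+2) * (u^(2*b+1) * (1-u^2)^a)
            = (2*b+2) * u^(2*b+1) * (1-u^2)^(a+1)
              - u^(2*b+1) * ((2*a+2) * ((1-u^2)^a - (1-u^2)^(a+1))) := by ring
          _ = _ := by rw [← hsq]; ring
      have hint : (∫ u in (0:ℝ)..1, ((2*(b:ℝ)+2*a+4) * (u^(2*b+1) * (1-u^2)^(a+1))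
              - (2*a+2) * (u^(2*b+1) * (1-u^2)^a)))
          = (1:ℝ)^(2*b+2) * (1-1^2)^(a+1) - 0^(2*b+2) * (1-0^2)^(a+1) := by
        apply intervalIntegral.integral_eq_sub_of_hasDerivAt hderiv
        apply Continuous.intervalIntegrable
        fun_prop
      rw [intervalIntegral.integral_sub, intervalIntegral.integral_const_mul,
        intervalIntegral.integral_const_mul] at hint
      · simp at hint; linarith
      · exact (Continuous.intervalIntegrable (by fun_prop) _ _)
      · exact (Continuous.intervalIntegrable (by fun_prop) _ _)
    rw [ih] at key
    have hpos : (2*(b:ℝ)+2*a+4) ≠ 0 := by positivity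
    have : (∫ u in (0:ℝ)..1, u^(2*b+1) * (1-u^2)^(a+1))
        = (2*a+2) * ((a.factorial * b.factorial : ℝ) / (2 * (a+b+1).factorial)) / (2*(b:ℝ)+2*a+4) := by
      field_simp at key ⊢; linarith
    rw [this]
    have hfa : ((a+1+b+1).factorial : ℝ) = (a+b+2) * (a+b+1).factorial := by
      have : a+1+b+1 = (a+b+1)+1 := by ring
      rw [this, Nat.factorial_succ]; push_cast; ring
    have h1 : ((a+1).factorial : ℝ) = (a+1) * a.factorial := by
      rw [Nat.factorial_succ]; push_cast; ring
    rw [hfa, h1]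
    have hne : ((a+b+1).factorial : ℝ) ≠ 0 := by positivity
    field_simp
    ring

lemma thetaInt (a b : ℕ) : (∫ x in (0:ℝ)..(Real.pi/2), Real.sin x ^ (2*b+1) * Real.cos x ^ (2*a+1))
    = (a.factorial * b.factorial : ℝ) / (2 * (a+b+1).factorial) := by
  rw [integral_sin_pow_mul_cos_pow_odd (2*b+1) a]
  simpa using aux_I b a

/-- The functions `ψ_{a,b}` form an orthonormal family for the `L²` inner product on
`SU(2) ≅ 𝕊³` with its normalised Haar measure. -/
theorem psiSU2_orthonormal (a b a' b' : ℕ) :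
    (1 / (2 * (Real.pi : ℂ) ^ 2)) *
      ∫ φ₂ in (0:ℝ)..(2 * Real.pi), ∫ φ₁ in (0:ℝ)..(2 * Real.pi),
        ∫ θ in (0:ℝ)..(Real.pi / 2),
          ((Real.sin θ * Real.cos θ : ℝ) : ℂ) *
            (starRingEnd ℂ) (psiSU2 a b θ φ₁ φ₂) * psiSU2 a' b' θ φ₁ φ₂ =
    if a = a' ∧ b = b' then 1 else 0 := by
  set C : ℂ := ((Real.sqrt ((Nat.factorial (a + b + 1) : ℝ) /
        ((Nat.factorial a : ℝ) * (Nat.factorial b : ℝ))) : ℂ) *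
      (Real.sqrt ((Nat.factorial (a' + b' + 1) : ℝ) /
        ((Nat.factorial a' : ℝ) * (Nat.factorial b' : ℝ))) : ℂ)) with hC
  set g : ℝ → ℂ := fun θ => ((Real.sin θ : ℂ)) * (Real.cos θ : ℂ) * (Real.cos θ : ℂ)^(a+a') *
        (-(Real.sin θ : ℂ))^(b+b') with hg
  have key : ∀ θ φ₁ φ₂ : ℝ,
      ((Real.sin θ * Real.cos θ : ℝ) : ℂ) *
        (starRingEnd ℂ) (psiSU2 a b θ φ₁ φ₂) * psiSU2 a' b' θ φ₁ φ₂ =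
      (C * g θ) *
        Complex.exp ((((a':ℤ) - a : ℤ) : ℂ) * Complex.I * φ₁) *
        Complex.exp ((((b:ℤ) - b' : ℤ) : ℂ) * Complex.I * φ₂) := by
    intro θ φ₁ φ₂
    have e1 : Complex.exp ((((a':ℤ) - a : ℤ) : ℂ) * Complex.I * φ₁)
        = Complex.exp (Complex.I * φ₁) ^ a' * Complex.exp (-(Complex.I * φ₁)) ^ a := by
      rw [← Complex.exp_nat_mul, ← Complex.exp_nat_mul, ← Complex.exp_add]
      congr 1; push_cast; ring
    have e2 : Complex.exp ((((b:ℤ) - b' : ℤ) : ℂ) * Complex.I * φ₂)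
        = Complex.exp (Complex.I * φ₂) ^ b * Complex.exp (-(Complex.I * φ₂)) ^ b' := by
      rw [← Complex.exp_nat_mul, ← Complex.exp_nat_mul, ← Complex.exp_add]
      congr 1; push_cast; ring
    rw [e1, e2, hC, hg]
    unfold psiSU2
    have hc : (starRingEnd ℂ) (Complex.exp (-(Complex.I * φ₂))) = Complex.exp (Complex.I * φ₂) := by
      rw [← Complex.exp_conj]; congr 1; simp
    have hc2 : (starRingEnd ℂ) (Complex.exp (Complex.I * φ₁)) = Complex.exp (-(Complex.I * φ₁)) := by
      rw [← Complex.exp_conj]; congr 1; simp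
    simp only [map_mul, map_pow, Complex.conj_ofReal, map_neg, hc, hc2, mul_pow]
    push_cast
    ring
  simp only [key]
  set T : ℂ := ∫ θ in (0:ℝ)..(Real.pi/2), g θ with hT
  have step1 : ∀ φ₁ φ₂ : ℝ,
      (∫ θ in (0:ℝ)..(Real.pi/2), (C * g θ) *
        Complex.exp ((((a':ℤ) - a : ℤ) : ℂ) * Complex.I * φ₁) *
        Complex.exp ((((b:ℤ) - b' : ℤ) : ℂ) * Complex.I * φ₂)) =
      (C * T) * Complex.exp ((((a':ℤ) - a : ℤ) : ℂ) * Complex.I * φ₁) *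
        Complex.exp ((((b:ℤ) - b' : ℤ) : ℂ) * Complex.I * φ₂) := by
    intro φ₁ φ₂
    rw [intervalIntegral.integral_mul_const, intervalIntegral.integral_mul_const,
      intervalIntegral.integral_const_mul]
  simp only [step1]
  have step2 : ∀ φ₂ : ℝ,
      (∫ φ₁ in (0:ℝ)..(2*Real.pi), (C * T) *
        Complex.exp ((((a':ℤ) - a : ℤ) : ℂ) * Complex.I * φ₁) *
        Complex.exp ((((b:ℤ) - b' : ℤ) : ℂ) * Complex.I * φ₂)) =
      (C * T) * (if ((a':ℤ) - a) = 0 then (2*Real.pi : ℂ) else 0) *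
        Complex.exp ((((b:ℤ) - b' : ℤ) : ℂ) * Complex.I * φ₂) := by
    intro φ₂
    rw [intervalIntegral.integral_mul_const, intervalIntegral.integral_const_mul, intPhi]
  simp only [step2]
  rw [intervalIntegral.integral_const_mul, intPhi]
  by_cases h1 : a = a'
  · by_cases h2 : b = b'
    · subst h1; subst h2
      rw [if_pos (by simp), if_pos (by simp), if_pos (by simp [and_self])]
      -- compute T
      have hgval : ∀ θ : ℝ, g θ = ((Real.sin θ ^ (2*b+1) * Real.cos θ ^ (2*a+1) : ℝ) : ℂ) := by
        intro θ
        simp only [hg]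
        rw [Even.neg_pow ⟨b, rfl⟩]
        push_cast
        ring
      have hTval : T = (((a.factorial * b.factorial : ℝ) / (2 * (a+b+1).factorial) : ℝ) : ℂ) := by
        rw [hT]
        simp only [hgval]
        rw [intervalIntegral.integral_ofReal, thetaInt]
      rw [hTval, hC]
      have hfac : (Real.sqrt ((Nat.factorial (a + b + 1) : ℝ) /
          ((Nat.factorial a : ℝ) * (Nat.factorial b : ℝ))) : ℝ) *
          (Real.sqrt ((Nat.factorial (a + b + 1) : ℝ) /
          ((Nat.factorial a : ℝ) * (Nat.factorial b : ℝ))) : ℝ)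
          = (Nat.factorial (a + b + 1) : ℝ) / ((Nat.factorial a : ℝ) * (Nat.factorial b : ℝ)) := by
        apply Real.mul_self_sqrt
        positivity
      have hπ : (Real.pi : ℂ) ≠ 0 := Complex.ofReal_ne_zero.mpr Real.pi_ne_zero
      have hne1 : ((Nat.factorial a : ℂ)) ≠ 0 := Nat.cast_ne_zero.mpr (Nat.factorial_ne_zero a)
      have hne2 : ((Nat.factorial b : ℂ)) ≠ 0 := Nat.cast_ne_zero.mpr (Nat.factorial_ne_zero b)
      have hne3 : ((Nat.factorial (a+b+1) : ℂ)) ≠ 0 := Nat.cast_ne_zero.mpr (Nat.factorial_ne_zero _)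
      have hC2 : ((Real.sqrt ((Nat.factorial (a + b + 1) : ℝ) /
          ((Nat.factorial a : ℝ) * (Nat.factorial b : ℝ))) : ℂ) *
          (Real.sqrt ((Nat.factorial (a + b + 1) : ℝ) /
          ((Nat.factorial a : ℝ) * (Nat.factorial b : ℝ))) : ℂ))
          = ((Nat.factorial (a + b + 1) : ℂ)) / ((Nat.factorial a : ℂ) * (Nat.factorial b : ℂ)) := by
        rw [← Complex.ofReal_mul, hfac]
        push_cast
        ring
      rw [hC2]
      push_cast
      field_simp
    · have hb : ((b:ℤ) - b') ≠ 0 := by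
        simpa [sub_eq_zero] using fun h => h2 (by exact_mod_cast h)
      rw [if_neg hb]
      simp [h2]
  · have ha : ((a':ℤ) - a) ≠ 0 := by
      simpa [sub_eq_zero] using fun h => h1 (by exact_mod_cast h.symm)
    rw [if_neg ha]
    simp [h1]
end

section
/- For a triple (n₁, n₂, n₃) of natural numbers with n = n₁ + n₂ + n₃, define ψ_{n₁,n₂,n₃}(θ, ξ, φ₁, φ₂, φ₃) = √((n+2)!/(2·n₁!·n₂!·n₃!)) · (sin θ)^{n₁+n₂} (cos θ)^{n₃} (cos ξ)^{n₁} (sin ξ)^{n₂} e^{i(n₁φ₁ + n₂φ₂ + n₃φ₃)}. Then for all triples (n₁,n₂,n₃) and (m₁,m₂,m₃) of natural numbers: (1/π³) ∫₀^{π/2} sin³θ cosθ dθ ∫₀^{π/2} sinξ cosξ dξ ∫₀^{2π}dφ₁ ∫₀^{2π}dφ₂ ∫₀^{2π}dφ₃ · conj(ψ_{n₁,n₂,n₃}) · ψ_{m₁,m₂,m₃} = 1 if (n₁,n₂,n₃) = (m₁,m₂,m₃), and = 0 otherwise. -/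
/-- The functions `ψ_{n₁,n₂,n₃}` on the coset space `SU(3)/SU(2) ≅ 𝕊⁵`, spanning the
`SU(3)` representation of highest weight `n·μ₁` where `n = n₁ + n₂ + n₃`. -/
noncomputable def psiS5 (n₁ n₂ n₃ : ℕ) (θ ξ φ₁ φ₂ φ₃ : ℝ) : ℂ :=
  (Real.sqrt ((Nat.factorial (n₁ + n₂ + n₃ + 2) : ℝ) /
      (2 * (Nat.factorial n₁ : ℝ) * (Nat.factorial n₂ : ℝ) * (Nat.factorial n₃ : ℝ))) : ℂ) *
    (Real.sin θ : ℂ) ^ (n₁ + n₂) * (Real.cos θ : ℂ) ^ n₃ *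
    (Real.cos ξ : ℂ) ^ n₁ * (Real.sin ξ : ℂ) ^ n₂ *
    Complex.exp (Complex.I *
      ((n₁ : ℂ) * (φ₁ : ℂ) + (n₂ : ℂ) * (φ₂ : ℂ) + (n₃ : ℂ) * (φ₃ : ℂ)))

private noncomputable def psiCC (n₁ n₂ n₃ : ℕ) : ℝ :=
  Real.sqrt ((Nat.factorial (n₁ + n₂ + n₃ + 2) : ℝ) /
      (2 * (Nat.factorial n₁ : ℝ) * (Nat.factorial n₂ : ℝ) * (Nat.factorial n₃ : ℝ)))

open Real intervalIntegral in
lemma beta_nat (a b : ℕ) :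
    ∫ x in (0:ℝ)..1, x ^ a * (1 - x) ^ b
      = (a.factorial * b.factorial : ℝ) / (a + b + 1).factorial := by
  have hs : 0 < Complex.re ((a : ℂ) + 1) := by simp; positivity
  have ht : 0 < Complex.re ((b : ℂ) + 1) := by simp; positivity
  have h := Complex.Gamma_mul_Gamma_eq_betaIntegral hs ht
  rw [show ((a:ℂ)+1) + ((b:ℂ)+1) = ((a+b+1 : ℕ) : ℂ) + 1 by push_cast; ring] at h
  rw [Complex.Gamma_nat_eq_factorial a, Complex.Gamma_nat_eq_factorial b,
    Complex.Gamma_nat_eq_factorial (a+b+1)] at h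
  have hbeta : Complex.betaIntegral ((a:ℂ)+1) ((b:ℂ)+1)
      = ((∫ x in (0:ℝ)..1, x ^ a * (1-x) ^ b : ℝ) : ℂ) := by
    rw [Complex.betaIntegral, ← intervalIntegral.integral_ofReal]
    refine intervalIntegral.integral_congr fun x _ => ?_
    rw [add_sub_cancel_right, add_sub_cancel_right, Complex.cpow_natCast,
      Complex.cpow_natCast]
    push_cast
    ring
  rw [hbeta] at h
  have hne : (((a+b+1).factorial : ℝ) : ℂ) ≠ 0 := by
    exact_mod_cast Nat.cast_ne_zero.mpr (a+b+1).factorial_ne_zero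
  apply Complex.ofReal_injective
  push_cast
  rw [eq_div_iff (by exact_mod_cast Nat.cast_ne_zero.mpr (a+b+1).factorial_ne_zero)]
  linear_combination -h

open Real in
lemma sincos_int (a b : ℕ) :
    ∫ x in (0:ℝ)..(π/2), sin x ^ (2*a+1) * cos x ^ (2*b+1)
      = (a.factorial * b.factorial : ℝ) / (2 * (a + b + 1).factorial) := by
  rw [integral_sin_pow_mul_cos_pow_odd (2*a+1) b, Real.sin_zero, Real.sin_pi_div_two]
  have sub : ∫ u in (0:ℝ)..1, (2*u) * ((u^2)^a * (1-u^2)^b)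
      = ∫ x in (0:ℝ)..1, x^a * (1-x)^b := by
    have := intervalIntegral.integral_comp_smul_deriv
      (a := (0:ℝ)) (b := (1:ℝ)) (f := fun u : ℝ => u^2) (f' := fun u : ℝ => 2*u)
      (g := fun x : ℝ => x^a * (1-x)^b)
      (fun x _ => by simpa [mul_comm] using (hasDerivAt_pow 2 x))
      (by fun_prop) (by fun_prop)
    simpa [smul_eq_mul, Function.comp] using this
  have congr1 : ∫ u in (0:ℝ)..1, u ^ (2*a+1) * (1 - u^2)^b
      = ∫ u in (0:ℝ)..1, (1/2) * ((2*u) * ((u^2)^a * (1-u^2)^b)) := by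
    refine intervalIntegral.integral_congr fun u _ => ?_
    rw [← pow_mul]
    ring
  rw [congr1, intervalIntegral.integral_const_mul, sub, beta_nat]
  field_simp

lemma expJ (k : ℤ) :
    ∫ φ in (0:ℝ)..(2 * Real.pi), Complex.exp (Complex.I * (k:ℂ) * (φ:ℂ))
      = if k = 0 then ((2 * Real.pi : ℝ) : ℂ) else 0 := by
  rcases eq_or_ne k 0 with rfl | hk
  · simp [Real.pi_nonneg]
  · rw [if_neg hk]
    have hc : Complex.I * (k:ℂ) ≠ 0 :=
      mul_ne_zero Complex.I_ne_zero (by exact_mod_cast hk)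
    rw [show (fun φ : ℝ => Complex.exp (Complex.I * (k:ℂ) * (φ:ℂ)))
        = fun φ : ℝ => Complex.exp ((Complex.I * (k:ℂ)) * (φ:ℂ)) from rfl,
      integral_exp_mul_complex hc]
    have h1 : Complex.I * (k:ℂ) * ((2 * Real.pi : ℝ) : ℂ) = (k:ℂ) * (2 * Real.pi * Complex.I) := by
      push_cast; ring
    rw [h1, Complex.exp_int_mul_two_pi_mul_I]
    simp

lemma tripleExp (c : ℂ) (k₁ k₂ k₃ : ℤ) :
    (∫ φ₁ in (0:ℝ)..(2 * Real.pi), ∫ φ₂ in (0:ℝ)..(2 * Real.pi),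
        ∫ φ₃ in (0:ℝ)..(2 * Real.pi),
          c * Complex.exp (Complex.I * (k₁:ℂ) * (φ₁:ℂ) + Complex.I * (k₂:ℂ) * (φ₂:ℂ)
              + Complex.I * (k₃:ℂ) * (φ₃:ℂ)))
      = c * (if k₁ = 0 then ((2 * Real.pi : ℝ) : ℂ) else 0)
          * (if k₂ = 0 then ((2 * Real.pi : ℝ) : ℂ) else 0)
          * (if k₃ = 0 then ((2 * Real.pi : ℝ) : ℂ) else 0) := by
  simp only [Complex.exp_add, ← mul_assoc, intervalIntegral.integral_mul_const,
    intervalIntegral.integral_const_mul, expJ]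

lemma psiS5_key (n₁ n₂ n₃ m₁ m₂ m₃ : ℕ) (θ ξ φ₁ φ₂ φ₃ : ℝ) :
    ((Real.sin θ ^ 3 * Real.cos θ * (Real.sin ξ * Real.cos ξ) : ℝ) : ℂ) *
      (starRingEnd ℂ) (psiS5 n₁ n₂ n₃ θ ξ φ₁ φ₂ φ₃) * psiS5 m₁ m₂ m₃ θ ξ φ₁ φ₂ φ₃
    = ((psiCC n₁ n₂ n₃ * psiCC m₁ m₂ m₃
        * (Real.sin θ ^ (n₁ + n₂ + (m₁ + m₂) + 3) * Real.cos θ ^ (n₃ + m₃ + 1))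
        * (Real.sin ξ ^ (n₂ + m₂ + 1) * Real.cos ξ ^ (n₁ + m₁ + 1)) : ℝ) : ℂ)
      * Complex.exp (Complex.I * (((m₁:ℤ) - (n₁:ℤ) : ℤ) : ℂ) * (φ₁:ℂ)
          + Complex.I * (((m₂:ℤ) - (n₂:ℤ) : ℤ) : ℂ) * (φ₂:ℂ)
          + Complex.I * (((m₃:ℤ) - (n₃:ℤ) : ℤ) : ℂ) * (φ₃:ℂ)) := by
  simp only [psiS5, psiCC, map_mul, map_pow, Complex.conj_ofReal, ← Complex.exp_conj,
    map_add, Complex.conj_I, map_natCast]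
  have hexp : Complex.exp (-Complex.I * ((n₁:ℂ) * φ₁ + (n₂:ℂ) * φ₂ + (n₃:ℂ) * φ₃))
        * Complex.exp (Complex.I * ((m₁:ℂ) * φ₁ + (m₂:ℂ) * φ₂ + (m₃:ℂ) * φ₃))
      = Complex.exp (Complex.I * (((m₁:ℤ) - (n₁:ℤ) : ℤ) : ℂ) * (φ₁:ℂ)
          + Complex.I * (((m₂:ℤ) - (n₂:ℤ) : ℤ) : ℂ) * (φ₂:ℂ)
          + Complex.I * (((m₃:ℤ) - (n₃:ℤ) : ℤ) : ℂ) * (φ₃:ℂ)) := by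
    rw [← Complex.exp_add]
    congr 1
    push_cast
    ring
  rw [← hexp]
  push_cast
  ring

/-- The functions `ψ_{n₁,n₂,n₃}` form an orthonormal family for the `L²` inner product on
the five-sphere `SU(3)/SU(2) ≅ 𝕊⁵`. -/
theorem psiS5_orthonormal (n₁ n₂ n₃ m₁ m₂ m₃ : ℕ) :
    (1 / (Real.pi : ℂ) ^ 3) *
      ∫ θ in (0:ℝ)..(Real.pi / 2), ∫ ξ in (0:ℝ)..(Real.pi / 2),
        ∫ φ₁ in (0:ℝ)..(2 * Real.pi), ∫ φ₂ in (0:ℝ)..(2 * Real.pi),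
          ∫ φ₃ in (0:ℝ)..(2 * Real.pi),
            ((Real.sin θ ^ 3 * Real.cos θ * (Real.sin ξ * Real.cos ξ) : ℝ) : ℂ) *
              (starRingEnd ℂ) (psiS5 n₁ n₂ n₃ θ ξ φ₁ φ₂ φ₃) *
              psiS5 m₁ m₂ m₃ θ ξ φ₁ φ₂ φ₃ =
    if n₁ = m₁ ∧ n₂ = m₂ ∧ n₃ = m₃ then 1 else 0 := by
  simp only [psiS5_key, tripleExp]
  by_cases h₁ : n₁ = m₁
  · by_cases h₂ : n₂ = m₂
    · by_cases h₃ : n₃ = m₃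
      · subst h₁; subst h₂; subst h₃
        simp only [sub_self, if_pos, and_self, if_true]
        simp only [intervalIntegral.integral_mul_const, intervalIntegral.integral_ofReal,
          intervalIntegral.integral_const_mul]
        rw [show n₁ + n₂ + (n₁ + n₂) + 3 = 2*(n₁+n₂+1)+1 from by ring,
          show n₃ + n₃ + 1 = 2*n₃+1 from by ring,
          show n₂ + n₂ + 1 = 2*n₂+1 from by ring,
          show n₁ + n₁ + 1 = 2*n₁+1 from by ring,
          sincos_int (n₁+n₂+1) n₃, sincos_int n₂ n₁]
        simp only [psiCC]
        rw [Real.mul_self_sqrt (by positivity)]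
        have e1 : ((n₁+n₂+n₃+2).factorial : ℝ) ≠ 0 := Nat.cast_ne_zero.mpr (Nat.factorial_ne_zero _)
        have e2 : ((n₁+n₂+1+n₃+1).factorial : ℝ) ≠ 0 := Nat.cast_ne_zero.mpr (Nat.factorial_ne_zero _)
        have e3 : ((n₂+n₁+1).factorial : ℝ) ≠ 0 := Nat.cast_ne_zero.mpr (Nat.factorial_ne_zero _)
        have e4 : (n₁.factorial : ℝ) ≠ 0 := Nat.cast_ne_zero.mpr (Nat.factorial_ne_zero _)
        have e5 : (n₂.factorial : ℝ) ≠ 0 := Nat.cast_ne_zero.mpr (Nat.factorial_ne_zero _)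
        have e6 : (n₃.factorial : ℝ) ≠ 0 := Nat.cast_ne_zero.mpr (Nat.factorial_ne_zero _)
        have hfe : n₁+n₂+1+n₃+1 = n₁+n₂+n₃+2 := by ring
        rw [hfe] at e2
        have hgoal : (n₁+n₂+n₃+2 : ℕ) = n₁+n₂+1+n₃+1 := by ring
        push_cast
        rw [hfe, show n₂+n₁+1 = n₁+n₂+1 from by ring]
        have c1 : ((n₁+n₂+n₃+2).factorial : ℂ) ≠ 0 := Nat.cast_ne_zero.mpr (Nat.factorial_ne_zero _)
        have c2 : ((n₁+n₂+1).factorial : ℂ) ≠ 0 := Nat.cast_ne_zero.mpr (Nat.factorial_ne_zero _)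
        have c4 : (n₁.factorial : ℂ) ≠ 0 := Nat.cast_ne_zero.mpr (Nat.factorial_ne_zero _)
        have c5 : (n₂.factorial : ℂ) ≠ 0 := Nat.cast_ne_zero.mpr (Nat.factorial_ne_zero _)
        have c6 : (n₃.factorial : ℂ) ≠ 0 := Nat.cast_ne_zero.mpr (Nat.factorial_ne_zero _)
        have cpi : (Real.pi : ℂ) ≠ 0 := Complex.ofReal_ne_zero.mpr Real.pi_ne_zero
        field_simp
      · have : ((m₃:ℤ) - (n₃:ℤ)) ≠ 0 := by omega
        simp [this, h₃]
    · have : ((m₂:ℤ) - (n₂:ℤ)) ≠ 0 := by omega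
      simp [this, h₂]
  · have : ((m₁:ℤ) - (n₁:ℤ)) ≠ 0 := by omega
    simp [this, h₁]
end

section
/- For every natural number n: (15/(16π³)) ∫₀^{2π} dφ ∫₀^{π} sinθ₁ dθ₁ ∫₀^{π} sin²θ₂ dθ₂ ∫₀^{π} sin³θ₃ dθ₃ ∫₀^{π} sin⁴θ₄ dθ₄ ∫₀^{π} sin⁵θ₅ dθ₅ · [ sin²θ₅ · (cos²θ₃ sin²θ₄ + cos²θ₄) ]^n = 60 · 4ⁿ · n! · (n+2)! / (2n+5)!. (Equivalently, the highest weight function Φ = √((1/60)·(1/4ⁿ)·(2n+5)!/(n!(n+2)!)) · (sinθ₅ (cosθ₃ sinθ₄ + i cosθ₄))ⁿ of the 𝔤₂ representation 𝒟_{0,n} has unit L² norm on 𝕊⁶.) -/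
open Real Finset intervalIntegral

lemma prod_odd_aux (m : ℕ) : ∏ i ∈ Finset.range m, (2*(i:ℝ)+2)/(2*(i:ℝ)+3)
    = 4^m * ((m.factorial:ℝ))^2 / (((2*m+1).factorial : ℝ)) := by
  induction m with
  | zero => simp
  | succ k ih =>
    rw [Finset.prod_range_succ, ih]
    have e1 : ((2*(k+1)+1).factorial : ℝ) = (2*(k:ℝ)+3) * ((2*(k:ℝ)+2) * ((2*k+1).factorial : ℝ)) := by
      have h : 2*(k+1)+1 = (2*k+1) + 1 + 1 := by omega
      rw [h, Nat.factorial_succ, Nat.factorial_succ]; push_cast; ring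
    have e2 : (((k+1).factorial : ℕ) : ℝ) = ((k:ℝ)+1) * (k.factorial : ℝ) := by
      rw [Nat.factorial_succ]; push_cast; ring
    have h1 : ((2*k+1).factorial : ℝ) ≠ 0 := Nat.cast_ne_zero.mpr (Nat.factorial_ne_zero _)
    have h2 : (2*(k:ℝ)+3) ≠ 0 := by positivity
    have h3 : (2*(k:ℝ)+2) ≠ 0 := by positivity
    rw [e1, e2]
    field_simp
    ring

lemma prod_even_aux (m : ℕ) : ∏ i ∈ Finset.range m, (2*(i:ℝ)+1)/(2*(i:ℝ)+2)
    = ((2*m).factorial : ℝ) / (4^m * ((m.factorial:ℝ))^2) := by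
  induction m with
  | zero => simp
  | succ k ih =>
    rw [Finset.prod_range_succ, ih]
    have e1 : ((2*(k+1)).factorial : ℝ) = (2*(k:ℝ)+2) * ((2*(k:ℝ)+1) * ((2*k).factorial : ℝ)) := by
      have h : 2*(k+1) = (2*k) + 1 + 1 := by omega
      rw [h, Nat.factorial_succ, Nat.factorial_succ]; push_cast; ring
    have e2 : (((k+1).factorial : ℕ) : ℝ) = ((k:ℝ)+1) * (k.factorial : ℝ) := by
      rw [Nat.factorial_succ]; push_cast; ring
    have h1 : ((2*k).factorial : ℝ) ≠ 0 := Nat.cast_ne_zero.mpr (Nat.factorial_ne_zero _)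
    have hf : ((k.factorial : ℕ):ℝ) ≠ 0 := Nat.cast_ne_zero.mpr (Nat.factorial_ne_zero _)
    have h2 : (2*(k:ℝ)+2) ≠ 0 := by positivity
    have h3 : ((k:ℝ)+1) ≠ 0 := by positivity
    rw [e1, e2]
    field_simp
    ring

lemma sin_pow_odd_int (m : ℕ) : ∫ x in (0:ℝ)..π, sin x ^ (2*m+1)
    = 2 * (4^m * ((m.factorial:ℝ))^2 / (((2*m+1).factorial : ℝ))) := by
  rw [integral_sin_pow_odd, prod_odd_aux]

lemma sin_pow_even_int (m : ℕ) : ∫ x in (0:ℝ)..π, sin x ^ (2*m)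
    = π * (((2*m).factorial : ℝ) / (4^m * ((m.factorial:ℝ))^2)) := by
  rw [integral_sin_pow_even, prod_even_aux]

lemma alt_sum (n : ℕ) :
    ∑ k ∈ Finset.range (n+1), (-1:ℝ)^k * (n.choose k : ℝ) / ((k:ℝ)+2)
      = 1/(((n:ℝ)+1)*((n:ℝ)+2)) := by
  have h1 : (∫ x in (0:ℝ)..1, x * (1-x)^n)
      = ∑ k ∈ Finset.range (n+1), (-1:ℝ)^k * (n.choose k:ℝ) / ((k:ℝ)+2) := by
    have h : (fun x : ℝ => x * (1-x)^n)
        = fun x => ∑ k ∈ Finset.range (n+1), ((-1:ℝ)^k * (n.choose k:ℝ)) * x^(k+1) := by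
      funext x
      rw [show (1:ℝ) - x = -x + 1 by ring, add_pow, Finset.mul_sum]
      refine Finset.sum_congr rfl fun k hk => ?_
      ring
    rw [h, intervalIntegral.integral_finset_sum
      (fun k _ => (Continuous.intervalIntegrable (by fun_prop) _ _))]
    refine Finset.sum_congr rfl fun k hk => ?_
    rw [intervalIntegral.integral_const_mul, integral_pow]
    norm_num
    ring
  have h2 : (∫ x in (0:ℝ)..1, x * (1-x)^n) = 1/(((n:ℝ)+1)*((n:ℝ)+2)) := by
    have hn1 : ((n:ℝ)+1) ≠ 0 := by positivity
    have hn2 : ((n:ℝ)+2) ≠ 0 := by positivity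
    have hF : ∀ x ∈ Set.uIcc (0:ℝ) 1,
        HasDerivAt (fun x : ℝ => (1-x)^(n+2)/((n:ℝ)+2) - (1-x)^(n+1)/((n:ℝ)+1))
          (x * (1-x)^n) x := by
      intro x _
      have h1x : HasDerivAt (fun x : ℝ => 1 - x) (-1) x := by
        simpa using (hasDerivAt_id x).const_sub 1
      have d1 := (h1x.fun_pow (n+2)).div_const ((n:ℝ)+2)
      have d2 := (h1x.fun_pow (n+1)).div_const ((n:ℝ)+1)
      refine (d1.sub d2).congr_deriv ?_
      rw [show n + 2 - 1 = n + 1 by omega, show n + 1 - 1 = n by omega]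
      push_cast
      field_simp
      ring
    rw [intervalIntegral.integral_eq_sub_of_hasDerivAt hF
      (Continuous.intervalIntegrable (by fun_prop) _ _)]
    norm_num
    field_simp
    ring
  rw [← h1, h2]

lemma term_val (k : ℕ) :
    (2 * (4^(k+1) * (((k+1).factorial:ℝ))^2 / (((2*(k+1)+1).factorial:ℝ)))) *
      (π * ((((2*(k+2)).factorial:ℝ)) / (4^(k+2) * (((k+2).factorial:ℝ))^2)))
      = π / ((k:ℝ)+2) := by
  have e1 : (((2*(k+2)).factorial):ℝ) = (2*(k:ℝ)+4) * (((2*(k+1)+1).factorial):ℝ) := by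
    have h : 2*(k+2) = (2*(k+1)+1) + 1 := by omega
    rw [h, Nat.factorial_succ]; push_cast; ring
  have e2 : (((k+2).factorial):ℝ) = ((k:ℝ)+2) * (((k+1).factorial):ℝ) := by
    have h : k+2 = (k+1)+1 := by omega
    rw [h, Nat.factorial_succ]; push_cast; ring
  have h1 : (((2*(k+1)+1).factorial):ℝ) ≠ 0 := Nat.cast_ne_zero.mpr (Nat.factorial_ne_zero _)
  have h2 : (((k+1).factorial):ℝ) ≠ 0 := Nat.cast_ne_zero.mpr (Nat.factorial_ne_zero _)
  have h3 : ((k:ℝ)+2) ≠ 0 := by positivity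
  rw [e1, e2]
  field_simp
  ring


lemma inner4 (n : ℕ) (c : ℝ) :
    (∫ θ in (0:ℝ)..π, sin θ ^ 4 * (1 - c * sin θ ^ 2) ^ n)
      = ∑ k ∈ Finset.range (n+1), (-c)^k * (n.choose k : ℝ) *
          (π * ((((2*(k+2)).factorial:ℝ)) / (4^(k+2) * (((k+2).factorial:ℝ))^2))) := by
  have h : (fun θ : ℝ => sin θ ^ 4 * (1 - c * sin θ ^ 2) ^ n)
      = fun θ : ℝ => ∑ k ∈ Finset.range (n+1),
          ((-c)^k * (n.choose k : ℝ)) * sin θ ^ (2*(k+2)) := by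
    funext θ
    rw [show (1:ℝ) - c * sin θ ^ 2 = -(c * sin θ ^2) + 1 by ring, add_pow, Finset.mul_sum]
    refine Finset.sum_congr rfl fun k hk => ?_
    ring
  rw [h, intervalIntegral.integral_finset_sum
    (fun k _ => (Continuous.intervalIntegrable (by fun_prop) _ _))]
  refine Finset.sum_congr rfl fun k hk => ?_
  rw [intervalIntegral.integral_const_mul, sin_pow_even_int (k+2)]


lemma triple (n : ℕ) (θ₁ θ₂ : ℝ) :
    (∫ θ₃ in (0:ℝ)..π, ∫ θ₄ in (0:ℝ)..π, ∫ θ₅ in (0:ℝ)..π,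
        (sin θ₁ * sin θ₂ ^ 2 * sin θ₃ ^ 3 * sin θ₄ ^ 4 * sin θ₅ ^ 5) *
          (sin θ₅ ^ 2 * (cos θ₃ ^ 2 * sin θ₄ ^ 2 + cos θ₄ ^ 2)) ^ n)
      = sin θ₁ * sin θ₂ ^ 2 *
          (π / (((n:ℝ)+1) * ((n:ℝ)+2)) *
            (2 * (4 ^ (n+2) * (((n+2).factorial : ℝ))^2 / (((2*(n+2)+1).factorial : ℝ))))) := by
  set K : ℝ := 2 * (4 ^ (n+2) * (((n+2).factorial : ℝ))^2 / (((2*(n+2)+1).factorial : ℝ))) with hK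
  have h5 : ∀ θ₃ θ₄ : ℝ,
      (∫ θ₅ in (0:ℝ)..π, (sin θ₁ * sin θ₂ ^ 2 * sin θ₃ ^ 3 * sin θ₄ ^ 4 * sin θ₅ ^ 5) *
          (sin θ₅ ^ 2 * (cos θ₃ ^ 2 * sin θ₄ ^ 2 + cos θ₄ ^ 2)) ^ n)
      = (sin θ₁ * sin θ₂ ^ 2) *
          (sin θ₃ ^ 3 * (sin θ₄ ^ 4 * (1 - sin θ₃ ^ 2 * sin θ₄ ^ 2) ^ n * K)) := by
    intro θ₃ θ₄
    have hfun : (fun θ₅ : ℝ => (sin θ₁ * sin θ₂ ^ 2 * sin θ₃ ^ 3 * sin θ₄ ^ 4 * sin θ₅ ^ 5) *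
          (sin θ₅ ^ 2 * (cos θ₃ ^ 2 * sin θ₄ ^ 2 + cos θ₄ ^ 2)) ^ n)
        = fun θ₅ : ℝ => ((sin θ₁ * sin θ₂ ^ 2) *
            (sin θ₃ ^ 3 * (sin θ₄ ^ 4 * (1 - sin θ₃ ^ 2 * sin θ₄ ^ 2) ^ n))) *
            sin θ₅ ^ (2*(n+2)+1) := by
      funext θ₅
      have hA : cos θ₃ ^ 2 * sin θ₄ ^ 2 + cos θ₄ ^ 2 = 1 - sin θ₃ ^ 2 * sin θ₄ ^ 2 := by
        rw [Real.cos_sq' θ₃, Real.cos_sq' θ₄]; ring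
      rw [hA, mul_pow]
      ring
    rw [hfun, intervalIntegral.integral_const_mul, sin_pow_odd_int (n+2), ← hK]
    ring
  simp only [h5]
  simp only [intervalIntegral.integral_const_mul, intervalIntegral.integral_mul_const]
  simp only [inner4 n]
  have h3 : (fun θ₃ : ℝ => sin θ₃ ^ 3 *
      ((∑ k ∈ Finset.range (n+1), (-(sin θ₃^2))^k * (n.choose k : ℝ) *
          (π * ((((2*(k+2)).factorial:ℝ)) / (4^(k+2) * (((k+2).factorial:ℝ))^2)))) * K))
      = fun θ₃ : ℝ => ∑ k ∈ Finset.range (n+1),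
          ((-1:ℝ)^k * (n.choose k : ℝ) *
            (π * ((((2*(k+2)).factorial:ℝ)) / (4^(k+2) * (((k+2).factorial:ℝ))^2))) * K) *
            sin θ₃ ^ (2*(k+1)+1) := by
    funext θ₃
    rw [Finset.sum_mul, Finset.mul_sum]
    refine Finset.sum_congr rfl fun k hk => ?_
    ring
  rw [h3, intervalIntegral.integral_finset_sum
    (fun k _ => (Continuous.intervalIntegrable (by fun_prop) _ _))]
  have hsum : ∀ k ∈ Finset.range (n+1),
      (∫ θ₃ in (0:ℝ)..π, ((-1:ℝ)^k * (n.choose k : ℝ) *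
          (π * ((((2*(k+2)).factorial:ℝ)) / (4^(k+2) * (((k+2).factorial:ℝ))^2))) * K) *
          sin θ₃ ^ (2*(k+1)+1))
      = (π * K) * ((-1:ℝ)^k * (n.choose k : ℝ) / ((k:ℝ)+2)) := by
    intro k _
    rw [intervalIntegral.integral_const_mul, sin_pow_odd_int (k+1)]
    linear_combination ((-1:ℝ)^k * (n.choose k:ℝ) * K) * term_val k
  rw [Finset.sum_congr rfl hsum, ← Finset.mul_sum, alt_sum n]
  ring


/-- Squared `L²` norm on `G₂/SU(3) ≅ 𝕊⁶` of the highest weight function of the `𝔤₂`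
representation `𝒟_{0,n}`: the integral of `|z_{[0,1]}|^{2n} = [sin²θ₅ (cos²θ₃ sin²θ₄ +
cos²θ₄)]^n` against the normalised round measure on `𝕊⁶` equals
`60 · 4ⁿ · n! · (n+2)! / (2n+5)!`. -/
theorem g2_highest_weight_norm (n : ℕ) :
    (15 / (16 * Real.pi ^ 3)) *
      ∫ φ in (0:ℝ)..(2 * Real.pi), ∫ θ₁ in (0:ℝ)..Real.pi, ∫ θ₂ in (0:ℝ)..Real.pi,
        ∫ θ₃ in (0:ℝ)..Real.pi, ∫ θ₄ in (0:ℝ)..Real.pi, ∫ θ₅ in (0:ℝ)..Real.pi,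
          (Real.sin θ₁ * Real.sin θ₂ ^ 2 * Real.sin θ₃ ^ 3 * Real.sin θ₄ ^ 4 *
              Real.sin θ₅ ^ 5) *
            (Real.sin θ₅ ^ 2 *
              (Real.cos θ₃ ^ 2 * Real.sin θ₄ ^ 2 + Real.cos θ₄ ^ 2)) ^ n =
    60 * 4 ^ n * (Nat.factorial n : ℝ) * (Nat.factorial (n + 2) : ℝ) /
      (Nat.factorial (2 * n + 5) : ℝ) := by
  simp only [triple n]
  set V : ℝ := π / (((n:ℝ)+1) * ((n:ℝ)+2)) *
      (2 * (4 ^ (n+2) * (((n+2).factorial : ℝ))^2 / (((2*(n+2)+1).factorial : ℝ)))) with hV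
  have h2 : ∀ θ₁ : ℝ, (∫ θ₂ in (0:ℝ)..π, sin θ₁ * sin θ₂ ^ 2 * V)
      = sin θ₁ * (π/2 * V) := by
    intro θ₁
    have hfun : (fun θ₂ : ℝ => sin θ₁ * sin θ₂ ^ 2 * V)
        = fun θ₂ : ℝ => (sin θ₁ * V) * sin θ₂ ^ 2 := by funext θ₂; ring
    rw [hfun, intervalIntegral.integral_const_mul, integral_sin_sq,
      Real.sin_zero, Real.sin_pi]
    ring
  simp only [h2]
  have h1 : (∫ θ₁ in (0:ℝ)..π, sin θ₁ * (π/2 * V)) = 2 * (π/2 * V) := by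
    rw [intervalIntegral.integral_mul_const, integral_sin, Real.cos_zero, Real.cos_pi]
    ring
  simp only [h1]
  rw [intervalIntegral.integral_const]
  have hidx : 2*(n+2)+1 = 2*n+5 := by ring
  rw [hV, hidx]
  have hfac : (((n+2).factorial : ℕ):ℝ) = ((n:ℝ)+2)*(((n:ℝ)+1)*((n.factorial : ℕ):ℝ)) := by
    have h : n+2 = (n+1)+1 := rfl
    rw [h, Nat.factorial_succ, Nat.factorial_succ]; push_cast; ring
  rw [hfac]
  have hpi : π ≠ 0 := Real.pi_ne_zero
  have hd : (((2*n+5).factorial : ℕ):ℝ) ≠ 0 := Nat.cast_ne_zero.mpr (Nat.factorial_ne_zero _)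
  have hn1 : ((n:ℝ)+1) ≠ 0 := by positivity
  have hn2 : ((n:ℝ)+2) ≠ 0 := by positivity
  rw [smul_eq_mul]
  field_simp
  ring
end
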